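/- Among all orthonormal sets {w_1,…,w_r} in ℝ^m, the first r left singular vectors of the snapshot matrix S ∈ ℝ^{m×n} minimize the snapshot reconstruction error ‖S − W Wᵀ S‖_F, where W = [w_1,…,w_r]; the minimum value is (Σ_{i>r} σ_i²)^{1/2}. -/

import Mathlib

/-!
Write `S = U Σ Vᵀ` and `Q = Uᵀ W`. Since `W Wᵀ` is an orthogonal projection, Pythagoras gives
`‖S - W Wᵀ S‖² = ‖S‖² - ‖Wᵀ S‖²`, and by orthogonal invariance `‖Wᵀ S‖² = ∑ᵢ (Q Qᵀ)ᵢᵢ σᵢ²`.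
The weights `(Q Qᵀ)ᵢᵢ` lie in `[0, 1]` and add up to `r`, so for decreasing `σᵢ²` this sum is at
most `σ₀² + ⋯ + σ_{r-1}²`, a value attained by the first `r` left singular vectors.
-/

open Matrix Finset

section Gram

variable {R : Type*} [CommRing R] {m n k : Type*} [Fintype m]

theorem sum_sq_eq_trace_transpose_mul_self [Fintype k] (A : Matrix m k R) :
    ∑ i, ∑ j, A i j ^ 2 = trace (Aᵀ * A) := by
  simp only [trace, Matrix.diag, mul_apply, transpose_apply, sq]
  exact Finset.sum_comm

theorem trace_transpose_mul_self_mul_transpose [Fintype n] [Fintype k] (A : Matrix m k R)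
    (V : Matrix n k R) [DecidableEq k] (hV : Vᵀ * V = 1) :
    trace ((A * Vᵀ)ᵀ * (A * Vᵀ)) = trace (Aᵀ * A) := by
  rw [transpose_mul, transpose_transpose, Matrix.mul_assoc, trace_mul_comm, Matrix.mul_assoc,
    Matrix.mul_assoc, hV, Matrix.mul_one]

theorem transpose_mul_self_transpose_mul {l : Type*} [Fintype l] [DecidableEq m]
    (U : Matrix m l R) (W : Matrix m k R) (hU : U * Uᵀ = 1) :
    (Uᵀ * W)ᵀ * (Uᵀ * W) = Wᵀ * W := by
  rw [transpose_mul, transpose_transpose, Matrix.mul_assoc, ← Matrix.mul_assoc U, hU,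
    Matrix.one_mul]

theorem transpose_mul_self_sub_proj [Fintype k] [DecidableEq k] (S : Matrix m n R)
    (W : Matrix m k R) (hW : Wᵀ * W = 1) :
    (S - W * Wᵀ * S)ᵀ * (S - W * Wᵀ * S) = Sᵀ * S - (Wᵀ * S)ᵀ * (Wᵀ * S) := by
  simp only [transpose_sub, transpose_mul, transpose_transpose, Matrix.sub_mul, Matrix.mul_sub,
    Matrix.mul_assoc]
  rw [← Matrix.mul_assoc Wᵀ W, hW, Matrix.one_mul]
  abel

end Gram

theorem diag_mul_transpose_nonneg {m k : Type*} [Fintype k] (Q : Matrix m k ℝ) (i : m) :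
    0 ≤ (Q * Qᵀ) i i :=
  Finset.sum_nonneg fun _ _ => mul_self_nonneg _

section Orthonormal

variable {m k : Type*} [Fintype m] [Fintype k] [DecidableEq k] {Q : Matrix m k ℝ}

theorem diag_mul_transpose_le_one (hQ : Qᵀ * Q = 1) (i : m) : (Q * Qᵀ) i i ≤ 1 := by
  set P := Q * Qᵀ
  have hPP : P * P = P := by
    rw [Matrix.mul_assoc, ← Matrix.mul_assoc Qᵀ, hQ, Matrix.one_mul]
  have hPsymm : Pᵀ = P := by rw [transpose_mul, transpose_transpose]
  -- a symmetric idempotent has `P i i = ∑ j, P i j ^ 2 ≥ P i i ^ 2`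
  have hrow : P i i = ∑ j, P i j ^ 2 := by
    conv_lhs => rw [← hPP]
    simp only [mul_apply, sq]
    refine Finset.sum_congr rfl fun j _ => ?_
    rw [← transpose_apply P j i, hPsymm]
  have hsq : P i i ^ 2 ≤ P i i :=
    hrow ▸ Finset.single_le_sum (f := fun j => P i j ^ 2) (fun j _ => sq_nonneg _) (mem_univ i)
  nlinarith [diag_mul_transpose_nonneg Q i]

theorem sum_diag_mul_transpose (hQ : Qᵀ * Q = 1) : ∑ i, (Q * Qᵀ) i i = Fintype.card k :=
  (trace_mul_comm Q Qᵀ).trans (by rw [hQ, trace_one])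

end Orthonormal

theorem sum_fin_ite_lt {M : Type*} [AddCommMonoid M] {m r : ℕ} (hrm : r ≤ m) (f : ℕ → M) :
    ∑ i : Fin m, (if (i : ℕ) < r then f i else 0) = ∑ i ∈ range r, f i := by
  rw [Fin.sum_univ_eq_sum_range (fun i => if i < r then f i else 0), ← sum_filter]
  congr 1
  ext i
  simp only [mem_filter, mem_range]
  omega

theorem sum_mul_le_sum_range_of_antitone {m r : ℕ} (hrm : r ≤ m) {s : ℕ → ℝ} (hs : Antitone s)
    {t : Fin m → ℝ} (ht0 : ∀ i, 0 ≤ t i) (ht1 : ∀ i, t i ≤ 1) (ht : ∑ i, t i = r) :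
    ∑ i : Fin m, t i * s i ≤ ∑ i ∈ range r, s i := by
  -- compare with the threshold `s r`: it carries the same total weight `r * s r` on both sides
  have key : ∀ i : Fin m, t i * (s i - s r) ≤ if (i : ℕ) < r then s i - s r else 0 := by
    intro i
    split_ifs with hir
    · exact mul_le_of_le_one_left (sub_nonneg.2 (hs hir.le)) (ht1 i)
    · exact mul_nonpos_of_nonneg_of_nonpos (ht0 i) (sub_nonpos.2 (hs (not_lt.1 hir)))
  have := Finset.sum_le_sum fun i (_ : i ∈ univ) => key i
  rw [sum_fin_ite_lt hrm (fun i => s i - s r), sum_sub_distrib, sum_const, card_range,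
    nsmul_eq_mul] at this
  simp only [mul_sub, sum_sub_distrib, ← Finset.sum_mul, ht] at this
  linarith

theorem sum_diag_mul_transpose_mul_le {m r : ℕ} (hrm : r ≤ m) {s : ℕ → ℝ} (hs : Antitone s)
    {Q : Matrix (Fin m) (Fin r) ℝ} (hQ : Qᵀ * Q = 1) :
    ∑ i : Fin m, (Q * Qᵀ) i i * s i ≤ ∑ i ∈ range r, s i :=
  sum_mul_le_sum_range_of_antitone hrm hs (diag_mul_transpose_nonneg Q)
    (diag_mul_transpose_le_one hQ) (by rw [sum_diag_mul_transpose hQ, Fintype.card_fin])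

def singularValueMatrix (m n : ℕ) (σ : ℕ → ℝ) : Matrix (Fin m) (Fin n) ℝ :=
  of fun i j => if (i : ℕ) = (j : ℕ) then σ i else 0

namespace singularValueMatrix

theorem transpose (m n : ℕ) (σ : ℕ → ℝ) :
    (singularValueMatrix m n σ)ᵀ = singularValueMatrix n m σ := by
  ext j i
  by_cases h : (i : ℕ) = j
  · simp [singularValueMatrix, h]
  · simp [singularValueMatrix, h, Ne.symm h]

theorem mul_transpose (m n : ℕ) (σ : ℕ → ℝ) :
    singularValueMatrix m n σ * (singularValueMatrix m n σ)ᵀ =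
      diagonal fun i : Fin m => if (i : ℕ) < n then σ i ^ 2 else 0 := by
  ext i i'
  simp only [singularValueMatrix, mul_apply, transpose_apply, of_apply, diagonal_apply]
  by_cases hi : (i : ℕ) < n
  · rw [sum_eq_single ⟨i, hi⟩ (fun j _ hj => by simp [Fin.ext_iff] at hj; simp [Ne.symm hj])
      (by simp)]
    by_cases hii' : i = i'
    · subst hii'
      simp [hi, sq]
    · simp [hii', show (i' : ℕ) ≠ i from fun h => hii' (Fin.ext h.symm)]
  · refine (sum_eq_zero fun j _ => ?_).trans (by simp [hi])
    simp [show (i : ℕ) ≠ j from fun h => hi (h ▸ j.2)]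

theorem transpose_mul_self_one {m r : ℕ} (hrm : r ≤ m) :
    (singularValueMatrix m r 1)ᵀ * singularValueMatrix m r 1 = 1 := by
  rw [transpose, ← transpose r m, mul_transpose, ← diagonal_one]
  congr 1
  ext k
  simp [lt_of_lt_of_le k.2 hrm]

theorem sum_diag_one_mul_transpose_mul {m r : ℕ} (hrm : r ≤ m) (s : ℕ → ℝ) :
    ∑ i : Fin m, (singularValueMatrix m r 1 * (singularValueMatrix m r 1)ᵀ) i i * s i =
      ∑ i ∈ range r, s i := by
  rw [mul_transpose, ← sum_fin_ite_lt hrm]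
  refine sum_congr rfl fun i _ => ?_
  rw [diagonal_apply_eq]
  split_ifs <;> simp

theorem trace_transpose_mul_self_transpose_mul {m n : ℕ} {k : Type*} [Fintype k]
    (σ : ℕ → ℝ) (Q : Matrix (Fin m) k ℝ) :
    trace ((Qᵀ * singularValueMatrix m n σ)ᵀ * (Qᵀ * singularValueMatrix m n σ)) =
      ∑ i : Fin m, (Q * Qᵀ) i i * if (i : ℕ) < n then σ i ^ 2 else 0 := by
  rw [transpose_mul, transpose_transpose, Matrix.mul_assoc, trace_mul_comm,
    ← Matrix.mul_assoc Q, Matrix.mul_assoc (Q * Qᵀ), mul_transpose]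
  simp only [trace, Matrix.diag, mul_diagonal]

end singularValueMatrix

theorem mul_singularValueMatrix_one {m r : ℕ} (hrm : r ≤ m) (U : Matrix (Fin m) (Fin m) ℝ) :
    U * singularValueMatrix m r 1 = of fun i (k : Fin r) => U i ⟨k, lt_of_lt_of_le k.2 hrm⟩ := by
  ext i k
  rw [mul_apply, sum_eq_single ⟨k, lt_of_lt_of_le k.2 hrm⟩]
  · simp [singularValueMatrix]
  · intro j _ hj
    simp [singularValueMatrix, show (j : ℕ) ≠ k from fun h => hj (Fin.ext h)]
  · simp

section SVD

variable {m n : ℕ} {σ : ℕ → ℝ} {U : Matrix (Fin m) (Fin m) ℝ} {V : Matrix (Fin n) (Fin n) ℝ}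
  {S : Matrix (Fin m) (Fin n) ℝ}

theorem trace_transpose_mul_self_transpose_mul_of_svd (hσ : ∀ i, n ≤ i → σ i = 0)
    (hV : Vᵀ * V = 1) (hS : S = U * singularValueMatrix m n σ * Vᵀ) {k : Type*} [Fintype k]
    (W : Matrix (Fin m) k ℝ) :
    trace ((Wᵀ * S)ᵀ * (Wᵀ * S)) = ∑ i : Fin m, (Uᵀ * W * (Uᵀ * W)ᵀ) i i * σ i ^ 2 := by
  have hWS : Wᵀ * S = (Uᵀ * W)ᵀ * singularValueMatrix m n σ * Vᵀ := by
    simp only [hS, transpose_mul, transpose_transpose, Matrix.mul_assoc]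
  rw [hWS, trace_transpose_mul_self_mul_transpose _ V hV,
    singularValueMatrix.trace_transpose_mul_self_transpose_mul]
  refine sum_congr rfl fun i _ => ?_
  split_ifs with hi
  · rfl
  · rw [hσ i (not_lt.1 hi), zero_pow two_ne_zero]

theorem trace_transpose_mul_self_of_svd (hσ : ∀ i, n ≤ i → σ i = 0) (hV : Vᵀ * V = 1)
    (hS : S = U * singularValueMatrix m n σ * Vᵀ) (hU : Uᵀ * U = 1) (hUU : U * Uᵀ = 1) :
    trace (Sᵀ * S) = ∑ i ∈ range m, σ i ^ 2 := by
  rw [← transpose_mul_self_transpose_mul U S hUU,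
    trace_transpose_mul_self_transpose_mul_of_svd hσ hV hS, hU, Matrix.one_mul, transpose_one,
    ← Fin.sum_univ_eq_sum_range (fun i => σ i ^ 2)]
  simp

theorem sum_sq_sub_proj_of_svd (hσ : ∀ i, n ≤ i → σ i = 0) (hV : Vᵀ * V = 1)
    (hS : S = U * singularValueMatrix m n σ * Vᵀ) (hU : Uᵀ * U = 1) (hUU : U * Uᵀ = 1)
    {k : Type*} [Fintype k] [DecidableEq k] {W : Matrix (Fin m) k ℝ} (hW : Wᵀ * W = 1) :
    ∑ i, ∑ j, ((S - W * Wᵀ * S) i j) ^ 2 =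
      ∑ i ∈ range m, σ i ^ 2 - ∑ i : Fin m, (Uᵀ * W * (Uᵀ * W)ᵀ) i i * σ i ^ 2 := by
  rw [sum_sq_eq_trace_transpose_mul_self, transpose_mul_self_sub_proj _ W hW, trace_sub,
    trace_transpose_mul_self_of_svd hσ hV hS hU hUU,
    trace_transpose_mul_self_transpose_mul_of_svd hσ hV hS]

end SVD

theorem pod_optimality_general (m n r : ℕ) (hrm : r ≤ m)
    (S : Matrix (Fin m) (Fin n) ℝ)
    (U : Matrix (Fin m) (Fin m) ℝ) (V : Matrix (Fin n) (Fin n) ℝ)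
    (σ : ℕ → ℝ) (hnn : ∀ i, 0 ≤ σ i)
    (hord : ∀ i j : ℕ, i ≤ j → σ j ≤ σ i)
    (hσ0 : ∀ i, min m n ≤ i → σ i = 0)
    (hU : Uᵀ * U = 1) (hUU : U * Uᵀ = 1) (hV : Vᵀ * V = 1)
    (hSVD : S = U * (Matrix.of fun (i : Fin m) (j : Fin n) =>
      if (i : ℕ) = (j : ℕ) then σ i else 0) * Vᵀ)
    (Ur : Matrix (Fin m) (Fin r) ℝ)
    (hUrdef : Ur = Matrix.of fun (i : Fin m) (k : Fin r) => U i ⟨k, lt_of_lt_of_le k.2 hrm⟩) :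
    (∀ W : Matrix (Fin m) (Fin r) ℝ, Wᵀ * W = 1 →
      Real.sqrt (∑ i : Fin m, ∑ j : Fin n, ((S - Ur * Urᵀ * S) i j) ^ 2) ≤
        Real.sqrt (∑ i : Fin m, ∑ j : Fin n, ((S - W * Wᵀ * S) i j) ^ 2)) ∧
    Real.sqrt (∑ i : Fin m, ∑ j : Fin n, ((S - Ur * Urᵀ * S) i j) ^ 2) =
      Real.sqrt (∑ i ∈ Finset.Ico r (min m n), σ i ^ 2) := by
  have herr {W : Matrix (Fin m) (Fin r) ℝ} (hW : Wᵀ * W = 1) :=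
    sum_sq_sub_proj_of_svd (fun i hi => hσ0 i ((min_le_right m n).trans hi)) hV hSVD hU hUU hW
  have hUtUr : Uᵀ * Ur = singularValueMatrix m r 1 := by
    rw [hUrdef, ← mul_singularValueMatrix_one hrm, ← Matrix.mul_assoc, hU, Matrix.one_mul]
  have hUr : Urᵀ * Ur = 1 := by
    rw [← transpose_mul_self_transpose_mul U Ur hUU, hUtUr,
      singularValueMatrix.transpose_mul_self_one hrm]
  have hcaptured := singularValueMatrix.sum_diag_one_mul_transpose_mul hrm (fun i => σ i ^ 2)
  rw [← hUtUr] at hcaptured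
  have hσsq : Antitone fun i => σ i ^ 2 := fun i j hij => pow_le_pow_left₀ (hnn j) (hord i j hij) 2
  refine ⟨fun W hW => Real.sqrt_le_sqrt ?_, congrArg Real.sqrt ?_⟩
  · rw [herr hUr, herr hW, hcaptured]
    have := sum_diag_mul_transpose_mul_le hrm hσsq
      ((transpose_mul_self_transpose_mul U W hUU).trans hW)
    linarith
  · rw [herr hUr, hcaptured, ← sum_Ico_eq_sub _ hrm]
    refine (sum_subset (Ico_subset_Ico_right (min_le_left m n)) fun i hi hi' => ?_).symm
    simp only [mem_Ico] at hi hi'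
    rw [hσ0 i (by omega), sq, zero_mul]

/-- POD optimality (Eckart–Young): among all matrices W with r orthonormal
columns, the first r left singular vectors minimize ‖S − W Wᵀ S‖_F, and the
minimum value is (Σ_{i>r} σ_i²)^{1/2}. -/
theorem pod_optimality (m n r : ℕ) (hrm : r ≤ m)
    (S : Matrix (Fin m) (Fin n) ℝ)
    (U : Matrix (Fin m) (Fin m) ℝ) (V : Matrix (Fin n) (Fin n) ℝ)
    (σ : ℕ → ℝ) (hnn : ∀ i, 0 ≤ σ i)
    (hord : ∀ i j : ℕ, i ≤ j → σ j ≤ σ i)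
    (hσ0 : ∀ i, min m n ≤ i → σ i = 0)
    (hU : Uᵀ * U = 1) (hUU : U * Uᵀ = 1) (hV : Vᵀ * V = 1) (hVV : V * Vᵀ = 1)
    (hSVD : S = U * (Matrix.of fun (i : Fin m) (j : Fin n) =>
      if (i : ℕ) = (j : ℕ) then σ i else 0) * Vᵀ)
    (Ur : Matrix (Fin m) (Fin r) ℝ)
    (hUrdef : Ur = Matrix.of fun (i : Fin m) (k : Fin r) => U i ⟨k, lt_of_lt_of_le k.2 hrm⟩) :
    (∀ W : Matrix (Fin m) (Fin r) ℝ, Wᵀ * W = 1 →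
      Real.sqrt (∑ i : Fin m, ∑ j : Fin n, ((S - Ur * Urᵀ * S) i j) ^ 2) ≤
        Real.sqrt (∑ i : Fin m, ∑ j : Fin n, ((S - W * Wᵀ * S) i j) ^ 2)) ∧
    Real.sqrt (∑ i : Fin m, ∑ j : Fin n, ((S - Ur * Urᵀ * S) i j) ^ 2) =
      Real.sqrt (∑ i ∈ Finset.Ico r (min m n), σ i ^ 2) :=
  pod_optimality_general m n r hrm S U V σ hnn hord hσ0 hU hUU hV hSVD Ur hUrdef
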